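/- Let $\nu:(0,\infty)\to(0,\infty)$ satisfy conditions (H1) with constant $a_1$. Let $w\in\mathbb{R}^d$, $r\in(0,2]$, $B = B(w,r)$, and let $f:\mathbb{R}^d\to[0,\infty)$ be measurable with $\int_{\mathbb{R}^d} f(y)(\nu(|y|)\wedge 1)\,dy < \infty$. Define $g(y) = \int_{B^c} f(z)\nu(|y-z|)\,dz$ for $y\in B$. Then there is a constant $c = c(a_1)$ such that for all $y \in B(w,r/2)$: $|g(y)-g(w)| \le c\,\frac{(g(w)\wedge g(y))\,|y-w|}{r}$, and in particular $g(w) \le c\, g(y)$. -/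

import Mathlib

/-!
Since `-ν'(ρ)/ρ` is nonincreasing, on `[u, 2u]` the density `-ν'` is at most four times its
average over `[u - h, u]`, `h = min (u/2) 1`, and that average is at most `ν(u - h)/h`, which the
two doubling conditions bound by `a₁² ν(v)/h`. Integrating over `[u, v]` gives
`ν u - ν v ≤ 16 a₁² (v - u) ν v / r` whenever `r/2 ≤ u ≤ v ≤ u + r/2`, `r ≤ 2`. For `z ∉ B(w, r)`
and `y ∈ B(w, r/2)` both `|y - z|` and `|w - z|` are at least `r/2`, so this is the pointwise
bound `|ν|y - z| - ν|w - z|| ≤ 16 a₁² |y - w| / r · (ν|y - z| ∧ ν|w - z|)`; integrating it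
against `f` gives the estimate for `g` with `c = 16 a₁² + 1`.
-/

open MeasureTheory Set Metric

section Kernel

variable {ν ν' : ℝ → ℝ} {a₁ : ℝ}

lemma integrableOn_Ioi_of_eq_neg_integral
    (hpos : ∀ r > (0:ℝ), 0 < ν r) (habs : ∀ r > (0:ℝ), ν r = -∫ ρ in Ioi r, ν' ρ)
    {r : ℝ} (hr : 0 < r) : IntegrableOn ν' (Ioi r) := by
  refine Integrable.of_integral_ne_zero fun h => ?_
  have := hpos r hr
  rw [habs r hr, h, neg_zero] at this
  exact lt_irrefl 0 this

lemma sub_eq_intervalIntegral_neg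
    (hpos : ∀ r > (0:ℝ), 0 < ν r) (habs : ∀ r > (0:ℝ), ν r = -∫ ρ in Ioi r, ν' ρ)
    {a b : ℝ} (ha : 0 < a) (hab : a ≤ b) : ν a - ν b = ∫ ρ in a..b, -ν' ρ := by
  rw [habs a ha, habs b (ha.trans_le hab), intervalIntegral.integral_neg,
    ← intervalIntegral.integral_Ioi_sub_Ioi (integrableOn_Ioi_of_eq_neg_integral hpos habs ha) hab]
  ring

lemma intervalIntegrable_of_eq_neg_integral
    (hpos : ∀ r > (0:ℝ), 0 < ν r) (habs : ∀ r > (0:ℝ), ν r = -∫ ρ in Ioi r, ν' ρ)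
    {a b : ℝ} (ha : 0 < a) (hab : a ≤ b) : IntervalIntegrable ν' volume a b :=
  (intervalIntegrable_iff_integrableOn_Ioc_of_le hab).2
    ((integrableOn_Ioi_of_eq_neg_integral hpos habs ha).mono_set Ioc_subset_Ioi_self)

lemma deriv_nonpos_of_eq_neg_integral
    (hpos : ∀ r > (0:ℝ), 0 < ν r) (habs : ∀ r > (0:ℝ), ν r = -∫ ρ in Ioi r, ν' ρ)
    (hratio : ∀ u v : ℝ, 0 < u → u ≤ v → -ν' v / v ≤ -ν' u / u)
    {σ : ℝ} (hσ : 0 < σ) : ν' σ ≤ 0 := by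
  by_contra! h
  -- `ν' ρ ≥ (ρ / σ) ν' σ ≥ ν' σ > 0` on `(σ, ∞)`, which has infinite measure.
  have hconst : IntegrableOn (fun _ => ν' σ) (Ioi σ) := by
    refine (integrableOn_Ioi_of_eq_neg_integral hpos habs hσ).mono' aestronglyMeasurable_const ?_
    filter_upwards [ae_restrict_mem measurableSet_Ioi] with ρ hρ
    have hρ0 : 0 < ρ := hσ.trans hρ
    have := hratio σ ρ hσ hρ.le
    rw [div_le_div_iff₀ hρ0 hσ] at this
    rw [Real.norm_eq_abs, abs_of_pos h]
    nlinarith [mul_nonneg h.le (sub_nonneg.2 hρ.le)]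
  rcases integrable_const_iff.1 hconst with h0 | hfin
  · exact h.ne' h0
  · simpa using hfin.measure_univ_lt_top

lemma neg_deriv_le_four_mul
    (hpos : ∀ r > (0:ℝ), 0 < ν r) (habs : ∀ r > (0:ℝ), ν r = -∫ ρ in Ioi r, ν' ρ)
    (hratio : ∀ u v : ℝ, 0 < u → u ≤ v → -ν' v / v ≤ -ν' u / u)
    {σ ρ : ℝ} (hσ : 0 < σ) (hσρ : σ ≤ ρ) (hρ : ρ ≤ 4 * σ) : -ν' ρ ≤ 4 * -ν' σ := by
  have hρ0 : 0 < ρ := hσ.trans_le hσρ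
  have hslope : 0 ≤ -ν' σ / σ :=
    div_nonneg (neg_nonneg.2 (deriv_nonpos_of_eq_neg_integral hpos habs hratio hσ)) hσ.le
  calc -ν' ρ = ρ * (-ν' ρ / ρ) := by field_simp
    _ ≤ ρ * (-ν' σ / σ) := mul_le_mul_of_nonneg_left (hratio σ ρ hσ hσρ) hρ0.le
    _ ≤ 4 * σ * (-ν' σ / σ) := mul_le_mul_of_nonneg_right hρ hslope
    _ = 4 * -ν' σ := by field_simp

lemma le_mul_of_le_add_min (ha₁ : 0 ≤ a₁)
    (hanti : ∀ u v : ℝ, 0 < u → u ≤ v → ν v ≤ ν u)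
    (hdbl1 : ∀ r : ℝ, 1 ≤ r → ν r ≤ a₁ * ν (r + 1))
    (hdbl2 : ∀ r : ℝ, 0 < r → r ≤ 1 → ν r ≤ a₁ * ν (2 * r))
    {s t : ℝ} (hs : 0 < s) (hst : s ≤ t) (ht : t ≤ s + min s 1) : ν s ≤ a₁ * ν t := by
  rcases le_or_gt s 1 with h1 | h1
  · calc ν s ≤ a₁ * ν (2 * s) := hdbl2 s hs h1
      _ ≤ a₁ * ν t := by
        gcongr
        exact hanti t (2 * s) (hs.trans_le hst) (by linarith [min_le_left s 1])
  · calc ν s ≤ a₁ * ν (s + 1) := hdbl1 s h1.le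
      _ ≤ a₁ * ν t := by
        gcongr
        exact hanti t (s + 1) (hs.trans_le hst) (by linarith [min_le_right s 1])

lemma mul_neg_deriv_le_four_mul_sub
    (hpos : ∀ r > (0:ℝ), 0 < ν r) (habs : ∀ r > (0:ℝ), ν r = -∫ ρ in Ioi r, ν' ρ)
    (hratio : ∀ u v : ℝ, 0 < u → u ≤ v → -ν' v / v ≤ -ν' u / u)
    {h u ρ : ℝ} (hh : 0 < h) (hhu : h ≤ u / 2) (huρ : u ≤ ρ) (hρ : ρ ≤ 2 * u) :
    h * -ν' ρ ≤ 4 * (ν (u - h) - ν u) := by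
  have huh : 0 < u - h := by linarith
  calc h * -ν' ρ = ∫ _ in (u - h)..u, -ν' ρ := by simp
    _ ≤ ∫ σ in (u - h)..u, 4 * -ν' σ := by
      refine intervalIntegral.integral_mono_on (by linarith) intervalIntegrable_const
        ((intervalIntegrable_of_eq_neg_integral hpos habs huh (by linarith)).neg.const_mul 4)
        fun σ hσ => ?_
      exact neg_deriv_le_four_mul hpos habs hratio (huh.trans_le hσ.1) (hσ.2.trans huρ)
        (by linarith [hσ.1])
    _ = 4 * (ν (u - h) - ν u) := by
      rw [intervalIntegral.integral_const_mul,
        sub_eq_intervalIntegral_neg hpos habs huh (by linarith)]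

lemma sub_le_mul_sub_mul_of_half_le
    (ha₁ : 1 ≤ a₁) (hpos : ∀ r > (0:ℝ), 0 < ν r)
    (hanti : ∀ u v : ℝ, 0 < u → u ≤ v → ν v ≤ ν u)
    (habs : ∀ r > (0:ℝ), ν r = -∫ ρ in Ioi r, ν' ρ)
    (hratio : ∀ u v : ℝ, 0 < u → u ≤ v → -ν' v / v ≤ -ν' u / u)
    (hdbl1 : ∀ r : ℝ, 1 ≤ r → ν r ≤ a₁ * ν (r + 1))
    (hdbl2 : ∀ r : ℝ, 0 < r → r ≤ 1 → ν r ≤ a₁ * ν (2 * r))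
    {r u v : ℝ} (hr : 0 < r) (hr2 : r ≤ 2) (hu : r / 2 ≤ u) (huv : u ≤ v)
    (hv : v ≤ u + r / 2) :
    ν u - ν v ≤ 16 * a₁ ^ 2 / r * (v - u) * ν v := by
  set h := min (u / 2) 1
  have hu0 : 0 < u := by linarith
  have hr4h : r / 4 ≤ h := le_min (by linarith) (by linarith)
  have hh0 : 0 < h := by linarith
  have hhu : h ≤ u / 2 := min_le_left _ _
  have hmean : ∀ ρ ∈ Icc u v, -ν' ρ ≤ 4 * (ν (u - h) - ν u) / h := fun ρ hρ => by
    rw [le_div_iff₀ hh0, mul_comm]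
    exact mul_neg_deriv_le_four_mul_sub hpos habs hratio hh0 hhu hρ.1 (by linarith [hρ.2])
  have hdouble : ν (u - h) ≤ a₁ ^ 2 * ν v :=
    calc ν (u - h) ≤ a₁ * ν u :=
          le_mul_of_le_add_min (by linarith) hanti hdbl1 hdbl2 (by linarith) (by linarith)
            (by linarith [le_min (show h ≤ u - h by linarith) (min_le_right (u / 2) 1)])
      _ ≤ a₁ * (a₁ * ν v) := by
          gcongr
          exact le_mul_of_le_add_min (by linarith) hanti hdbl1 hdbl2 hu0 huv
            (by linarith [le_min (show r / 2 ≤ u by linarith) (show r / 2 ≤ 1 by linarith)])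
      _ = a₁ ^ 2 * ν v := by ring
  calc ν u - ν v = ∫ ρ in u..v, -ν' ρ := sub_eq_intervalIntegral_neg hpos habs hu0 huv
    _ ≤ ∫ _ in u..v, 4 * (ν (u - h) - ν u) / h :=
      intervalIntegral.integral_mono_on huv
        (intervalIntegrable_of_eq_neg_integral hpos habs hu0 huv).neg intervalIntegrable_const
        hmean
    _ = (v - u) * (4 / h * (ν (u - h) - ν u)) := by
      rw [intervalIntegral.integral_const, smul_eq_mul]; ring
    _ ≤ (v - u) * (16 / r * (a₁ ^ 2 * ν v)) := by
      have hdiff : 0 ≤ ν (u - h) - ν u := sub_nonneg.2 (hanti _ _ (by linarith) (by linarith))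
      have hfactor : 4 / h ≤ 16 / r := by rw [div_le_div_iff₀ hh0 hr]; linarith
      gcongr (v - u) * ?_
      exact mul_le_mul hfactor (by linarith [hpos u hu0]) hdiff (by positivity)
    _ = 16 * a₁ ^ 2 / r * (v - u) * ν v := by ring

lemma abs_sub_le_mul_abs_sub_mul_min
    (ha₁ : 1 ≤ a₁) (hpos : ∀ r > (0:ℝ), 0 < ν r)
    (hanti : ∀ u v : ℝ, 0 < u → u ≤ v → ν v ≤ ν u)
    (habs : ∀ r > (0:ℝ), ν r = -∫ ρ in Ioi r, ν' ρ)
    (hratio : ∀ u v : ℝ, 0 < u → u ≤ v → -ν' v / v ≤ -ν' u / u)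
    (hdbl1 : ∀ r : ℝ, 1 ≤ r → ν r ≤ a₁ * ν (r + 1))
    (hdbl2 : ∀ r : ℝ, 0 < r → r ≤ 1 → ν r ≤ a₁ * ν (2 * r))
    {r s t : ℝ} (hr : 0 < r) (hr2 : r ≤ 2) (hs : r / 2 ≤ s) (ht : r / 2 ≤ t)
    (hst : |s - t| ≤ r / 2) :
    |ν s - ν t| ≤ 16 * a₁ ^ 2 / r * |s - t| * min (ν s) (ν t) := by
  wlog hle : s ≤ t generalizing s t
  · rw [abs_sub_comm, abs_sub_comm s, min_comm]
    exact this ht hs (by rwa [abs_sub_comm]) (le_of_not_ge hle)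
  have hνle : ν t ≤ ν s := hanti s t (by linarith) hle
  rw [abs_of_nonneg (sub_nonneg.2 hνle), abs_sub_comm, abs_of_nonneg (sub_nonneg.2 hle),
    min_eq_right hνle]
  rw [abs_sub_comm, abs_of_nonneg (sub_nonneg.2 hle)] at hst
  exact sub_le_mul_sub_mul_of_half_le ha₁ hpos hanti habs hratio hdbl1 hdbl2 hr hr2 hs hle
    (by linarith)

variable {E : Type*} [NormedAddCommGroup E]

lemma half_le_norm_sub_of_mem_ball_of_notMem_ball {w y z : E} {r : ℝ}
    (hy : y ∈ ball w (r / 2)) (hz : z ∉ ball w r) : r / 2 ≤ ‖y - z‖ := by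
  rw [mem_ball_iff_norm] at hy
  rw [mem_ball_iff_norm', not_lt] at hz
  linarith [norm_sub_le_norm_sub_add_norm_sub w y z, norm_sub_rev w y]

lemma abs_sub_le_mul_norm_sub_mul_min_of_mem_ball
    (ha₁ : 1 ≤ a₁) (hpos : ∀ r > (0:ℝ), 0 < ν r)
    (hanti : ∀ u v : ℝ, 0 < u → u ≤ v → ν v ≤ ν u)
    (habs : ∀ r > (0:ℝ), ν r = -∫ ρ in Ioi r, ν' ρ)
    (hratio : ∀ u v : ℝ, 0 < u → u ≤ v → -ν' v / v ≤ -ν' u / u)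
    (hdbl1 : ∀ r : ℝ, 1 ≤ r → ν r ≤ a₁ * ν (r + 1))
    (hdbl2 : ∀ r : ℝ, 0 < r → r ≤ 1 → ν r ≤ a₁ * ν (2 * r))
    {w y z : E} {r : ℝ} (hr : 0 < r) (hr2 : r ≤ 2)
    (hy : y ∈ ball w (r / 2)) (hz : z ∉ ball w r) :
    |ν ‖y - z‖ - ν ‖w - z‖| ≤ 16 * a₁ ^ 2 / r * ‖y - w‖ * min (ν ‖y - z‖) (ν ‖w - z‖) := by
  have hdist : |‖y - z‖ - ‖w - z‖| ≤ ‖y - w‖ := by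
    simpa using abs_norm_sub_norm_le (y - z) (w - z)
  have hyw : ‖y - w‖ < r / 2 := mem_ball_iff_norm.1 hy
  have hyz := half_le_norm_sub_of_mem_ball_of_notMem_ball hy hz
  have hwz := half_le_norm_sub_of_mem_ball_of_notMem_ball (mem_ball_self (half_pos hr)) hz
  have := hpos _ (show 0 < ‖y - z‖ by linarith)
  have := hpos _ (show 0 < ‖w - z‖ by linarith)
  calc |ν ‖y - z‖ - ν ‖w - z‖|
      ≤ 16 * a₁ ^ 2 / r * |‖y - z‖ - ‖w - z‖| * min (ν ‖y - z‖) (ν ‖w - z‖) :=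
        abs_sub_le_mul_abs_sub_mul_min ha₁ hpos hanti habs hratio hdbl1 hdbl2 hr hr2 hyz hwz
          (by linarith)
    _ ≤ 16 * a₁ ^ 2 / r * ‖y - w‖ * min (ν ‖y - z‖) (ν ‖w - z‖) := by gcongr

lemma aestronglyMeasurable_comp_norm_sub [MeasurableSpace E] [OpensMeasurableSpace E]
    {μ : Measure E} (hanti : ∀ u v : ℝ, 0 < u → u ≤ v → ν v ≤ ν u)
    {S : Set E} (hS : MeasurableSet S) {p : E} {ε : ℝ} (hε : 0 < ε)
    (hp : ∀ z ∈ S, ε ≤ ‖p - z‖) :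
    AEStronglyMeasurable (fun z => ν ‖p - z‖) (μ.restrict S) := by
  -- `ν` itself need not be measurable on all of `ℝ`; its truncation at `ε` is antitone.
  have hmono : Antitone fun x => ν (max x ε) := fun a b hab =>
    hanti _ _ (hε.trans_le (le_max_right _ _)) (max_le_max hab le_rfl)
  have hdist : Continuous fun z : E => ‖p - z‖ := by fun_prop
  refine (hmono.measurable.comp hdist.measurable).aestronglyMeasurable.congr ?_
  filter_upwards [ae_restrict_mem hS] with z hz
  simp [max_eq_left (hp z hz)]

end Kernel

lemma abs_integral_sub_le_mul_min {α : Type*} [MeasurableSpace α] {μ : Measure α}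
    {F G : α → ℝ} {K : ℝ} (hK : 0 ≤ K)
    (hF : AEStronglyMeasurable F μ) (hG : AEStronglyMeasurable G μ)
    (hFG : ∀ᵐ x ∂μ, |F x - G x| ≤ K * min (F x) (G x)) :
    |∫ x, F x ∂μ - ∫ x, G x ∂μ| ≤ K * min (∫ x, F x ∂μ) (∫ x, G x ∂μ) := by
  have hdom : ∀ {F G : α → ℝ}, AEStronglyMeasurable F μ →
      (∀ᵐ x ∂μ, |F x - G x| ≤ K * min (F x) (G x)) → Integrable G μ → Integrable F μ := by
    intro F G hF hFG hG
    refine (hG.norm.const_mul (1 + K)).mono' hF ?_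
    filter_upwards [hFG] with x hx
    have := abs_sub_abs_le_abs_sub (F x) (G x)
    have := mul_le_mul_of_nonneg_left ((min_le_right (F x) (G x)).trans (le_abs_self (G x))) hK
    simp only [Real.norm_eq_abs]
    linarith
  by_cases hGi : Integrable G μ
  · have hFi := hdom hF hFG hGi
    have hmin : Integrable (fun x => K * min (F x) (G x)) μ := by
      refine (hFi.norm.const_mul K).mono' ((hF.inf hG).const_mul K) ?_
      filter_upwards [hFG] with x hx
      rw [Real.norm_eq_abs, abs_of_nonneg ((abs_nonneg _).trans hx)]
      exact mul_le_mul_of_nonneg_left ((min_le_left _ _).trans (le_abs_self _)) hK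
    calc |∫ x, F x ∂μ - ∫ x, G x ∂μ| = |∫ x, (F x - G x) ∂μ| := by rw [integral_sub hFi hGi]
      _ ≤ ∫ x, |F x - G x| ∂μ := abs_integral_le_integral_abs
      _ ≤ ∫ x, K * min (F x) (G x) ∂μ := integral_mono_ae (hFi.sub hGi).abs hmin hFG
      _ ≤ K * min (∫ x, F x ∂μ) (∫ x, G x ∂μ) := by
        rw [mul_min_of_nonneg _ _ hK, ← integral_const_mul, ← integral_const_mul]
        exact le_min
          (integral_mono hmin (hFi.const_mul K) fun x => by gcongr; exact min_le_left _ _)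
          (integral_mono hmin (hGi.const_mul K) fun x => by gcongr; exact min_le_right _ _)
  · have hFi : ¬Integrable F μ := fun hFi => hGi <| hdom hG
      (by simpa only [abs_sub_comm, min_comm] using hFG) hFi
    simp [integral_undef hFi, integral_undef hGi]

theorem lipschitz_bound_for_g_general
    {d : ℕ}
    (ν ν' : ℝ → ℝ) (a₁ : ℝ) (ha₁ : 1 ≤ a₁)
    (hpos : ∀ r > (0:ℝ), 0 < ν r)
    (hanti : ∀ u v : ℝ, 0 < u → u ≤ v → ν v ≤ ν u)
    (habs : ∀ r > (0:ℝ), ν r = -∫ ρ in Set.Ioi r, ν' ρ)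
    (hratio : ∀ u v : ℝ, 0 < u → u ≤ v → -ν' v / v ≤ -ν' u / u)
    (hdbl1 : ∀ r : ℝ, 1 ≤ r → ν r ≤ a₁ * ν (r + 1))
    (hdbl2 : ∀ r : ℝ, 0 < r → r ≤ 1 → ν r ≤ a₁ * ν (2 * r)) :
    ∃ c > (0:ℝ), ∀ (w : EuclideanSpace ℝ (Fin d)) (r : ℝ), 0 < r → r ≤ 2 →
      ∀ f : EuclideanSpace ℝ (Fin d) → ℝ, Measurable f → (∀ x, 0 ≤ f x) →
      Integrable (fun y => f y * min (ν ‖y‖) 1) →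
      ∀ g : EuclideanSpace ℝ (Fin d) → ℝ,
        (∀ y ∈ ball w r, g y = ∫ z in (ball w r)ᶜ, f z * ν ‖y - z‖) →
        ∀ y ∈ ball w (r / 2),
          |g y - g w| ≤ c * (min (g w) (g y)) * ‖y - w‖ / r ∧ g w ≤ c * g y := by
  refine ⟨16 * a₁ ^ 2 + 1, by positivity, fun w r hr hr2 f hfm hf0 _ g hg y hy => ?_⟩
  have hB : MeasurableSet (ball w r)ᶜ := measurableSet_ball.compl
  have hw : w ∈ ball w (r / 2) := mem_ball_self (half_pos hr)
  have hg_eq : ∀ p ∈ ball w (r / 2), g p = ∫ z in (ball w r)ᶜ, f z * ν ‖p - z‖ :=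
    fun p hp => hg p (ball_subset_ball (by linarith) hp)
  have hg_nonneg : ∀ p ∈ ball w (r / 2), 0 ≤ g p := fun p hp => by
    rw [hg_eq p hp]
    refine setIntegral_nonneg hB fun z hz => mul_nonneg (hf0 z) (hpos _ ?_).le
    linarith [half_le_norm_sub_of_mem_ball_of_notMem_ball hp hz]
  have hmeas : ∀ p ∈ ball w (r / 2),
      AEStronglyMeasurable (fun z => f z * ν ‖p - z‖) (volume.restrict (ball w r)ᶜ) :=
    fun p hp => hfm.aestronglyMeasurable.mul <| aestronglyMeasurable_comp_norm_sub hanti hB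
      (half_pos hr) fun z hz => half_le_norm_sub_of_mem_ball_of_notMem_ball hp hz
  have hK : 16 * a₁ ^ 2 / r * ‖y - w‖ ≤ 8 * a₁ ^ 2 := by
    have := mem_ball_iff_norm.1 hy
    rw [div_mul_eq_mul_div, div_le_iff₀ hr]
    nlinarith [mul_nonneg (sq_nonneg a₁) (sub_nonneg.2 this.le)]
  have hgap : |g y - g w| ≤ 16 * a₁ ^ 2 / r * ‖y - w‖ * min (g y) (g w) := by
    rw [hg_eq y hy, hg_eq w hw]
    refine abs_integral_sub_le_mul_min (by positivity) (hmeas y hy) (hmeas w hw) ?_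
    filter_upwards [ae_restrict_mem hB] with z hz
    rw [← mul_sub, abs_mul, abs_of_nonneg (hf0 z), ← mul_min_of_nonneg _ _ (hf0 z),
      mul_left_comm]
    exact mul_le_mul_of_nonneg_left (abs_sub_le_mul_norm_sub_mul_min_of_mem_ball
      ha₁ hpos hanti habs hratio hdbl1 hdbl2 hr hr2 hy hz) (hf0 z)
  have hgy := hg_nonneg y hy
  have hmin : 0 ≤ min (g w) (g y) := le_min (hg_nonneg w hw) hgy
  constructor
  · calc |g y - g w| ≤ 16 * a₁ ^ 2 * min (g w) (g y) * ‖y - w‖ / r :=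
          hgap.trans_eq (by rw [min_comm]; ring)
      _ ≤ (16 * a₁ ^ 2 + 1) * min (g w) (g y) * ‖y - w‖ / r := by gcongr; linarith
  · calc g w ≤ g y + 16 * a₁ ^ 2 / r * ‖y - w‖ * min (g y) (g w) := by
          linarith [abs_sub_comm (g y) (g w), le_abs_self (g w - g y)]
      _ ≤ g y + 8 * a₁ ^ 2 * g y := by
          linarith [mul_le_mul hK (min_le_left _ _) (by rwa [min_comm]) (by positivity)]
      _ ≤ (16 * a₁ ^ 2 + 1) * g y := by nlinarith [sq_nonneg a₁]

theorem lipschitz_bound_for_g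
    {d : ℕ} (hd : 1 ≤ d)
    (ν ν' : ℝ → ℝ) (a₁ : ℝ) (ha₁ : 1 ≤ a₁)
    (hpos : ∀ r > (0:ℝ), 0 < ν r)
    (hanti : ∀ u v : ℝ, 0 < u → u ≤ v → ν v ≤ ν u)
    (habs : ∀ r > (0:ℝ), ν r = -∫ ρ in Set.Ioi r, ν' ρ)
    (hratio : ∀ u v : ℝ, 0 < u → u ≤ v → -ν' v / v ≤ -ν' u / u)
    (hdbl1 : ∀ r : ℝ, 1 ≤ r → ν r ≤ a₁ * ν (r + 1))
    (hdbl2 : ∀ r : ℝ, 0 < r → r ≤ 1 → ν r ≤ a₁ * ν (2 * r)) :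
    ∃ c > (0:ℝ), ∀ (w : EuclideanSpace ℝ (Fin d)) (r : ℝ), 0 < r → r ≤ 2 →
      ∀ f : EuclideanSpace ℝ (Fin d) → ℝ, Measurable f → (∀ x, 0 ≤ f x) →
      Integrable (fun y => f y * min (ν ‖y‖) 1) →
      ∀ g : EuclideanSpace ℝ (Fin d) → ℝ,
        (∀ y ∈ ball w r, g y = ∫ z in (ball w r)ᶜ, f z * ν ‖y - z‖) →
        ∀ y ∈ ball w (r / 2),
          |g y - g w| ≤ c * (min (g w) (g y)) * ‖y - w‖ / r ∧ g w ≤ c * g y :=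
  lipschitz_bound_for_g_general ν ν' a₁ ha₁ hpos hanti habs hratio hdbl1 hdbl2
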